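/- arXiv:1510.04568 — 2 statements merged into one kernel-verified Lean document; each statement's English description precedes it below -/
import Mathlib

section
/- Let N ≥ 2, let K, G be real n_Γ×n_Γ matrices, D a real n_Γ×N matrix, F a real N×N matrix, and 1_N ∈ ℝ^N the all-ones vector. Define 𝒦 = [[K, D, 0], [Dᵀ, F, 1_N], [0ᵀ, 1_Nᵀ, 0]] and 𝒢 = [[G, D, 0], [Dᵀ, F, 1_N], [0ᵀ, 1_Nᵀ, 0]]. Let Z ∈ ℝ^{N×(N−1)} be a matrix whose columns form a basis of the subspace {x ∈ ℝ^N : 1_Nᵀx = 0}, assume ZᵀFZ is invertible, and set Q = DZ(ZᵀFZ)^{−1}(DZ)ᵀ. If λ ≠ 1, z = (z₁, z₂, z₃) ∈ ℝ^{n_Γ} × ℝ^N × ℝ is nonzero, and 𝒦z = λ𝒢z, then z₁ ≠ 0 and (K − Q)z₁ = λ(G − Q)z₁. -/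
open Matrix

/-- The block 3×3 matrix [[K, D, 0], [Dᵀ, F, 1_N], [0ᵀ, 1_Nᵀ, 0]]. -/
noncomputable def bigMat {nΓ N : ℕ} (K : Matrix (Fin nΓ) (Fin nΓ) ℝ)
    (D : Matrix (Fin nΓ) (Fin N) ℝ) (F : Matrix (Fin N) (Fin N) ℝ) :
    Matrix (Fin nΓ ⊕ (Fin N ⊕ Unit)) (Fin nΓ ⊕ (Fin N ⊕ Unit)) ℝ :=
  Matrix.of fun i j =>
    match i, j with
    | Sum.inl a, Sum.inl b => K a b
    | Sum.inl a, Sum.inr (Sum.inl b) => D a b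
    | Sum.inl _, Sum.inr (Sum.inr _) => 0
    | Sum.inr (Sum.inl a), Sum.inl b => D b a
    | Sum.inr (Sum.inl a), Sum.inr (Sum.inl b) => F a b
    | Sum.inr (Sum.inl _), Sum.inr (Sum.inr _) => 1
    | Sum.inr (Sum.inr _), Sum.inl _ => 0
    | Sum.inr (Sum.inr _), Sum.inr (Sum.inl _) => 1
    | Sum.inr (Sum.inr _), Sum.inr (Sum.inr _) => 0

/-- If λ ≠ 1 and z ≠ 0 satisfies the generalized eigenvalue problem 𝒦z = λ𝒢z, then
z₁ ≠ 0 and (K − Q)z₁ = λ(G − Q)z₁, where Q = DZ(ZᵀFZ)⁻¹(DZ)ᵀ and the columns of Z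
form a basis of the nullspace of 1_Nᵀ. -/
theorem stmt2 (nΓ N : ℕ) (hN : 2 ≤ N) (K G : Matrix (Fin nΓ) (Fin nΓ) ℝ)
    (D : Matrix (Fin nΓ) (Fin N) ℝ) (F : Matrix (Fin N) (Fin N) ℝ)
    (Z : Matrix (Fin N) (Fin (N - 1)) ℝ)
    (hZli : LinearIndependent ℝ (fun j : Fin (N - 1) => Zᵀ j))
    (hZspan : ∀ x : Fin N → ℝ,
      x ∈ Submodule.span ℝ (Set.range fun j : Fin (N - 1) => Zᵀ j) ↔ ∑ i, x i = 0)
    (hZFZ : IsUnit (Zᵀ * F * Z))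
    (Q : Matrix (Fin nΓ) (Fin nΓ) ℝ) (hQ : Q = D * Z * (Zᵀ * F * Z)⁻¹ * (D * Z)ᵀ)
    (lam : ℝ) (hlam : lam ≠ 1)
    (z : (Fin nΓ ⊕ (Fin N ⊕ Unit)) → ℝ) (hz : z ≠ 0)
    (heig : (bigMat K D F).mulVec z = lam • (bigMat G D F).mulVec z) :
    (fun a => z (Sum.inl a)) ≠ 0 ∧
      (K - Q).mulVec (fun a => z (Sum.inl a)) =
        lam • (G - Q).mulVec (fun a => z (Sum.inl a)) := by
  set z1 : Fin nΓ → ℝ := fun a => z (Sum.inl a) with hz1def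
  set z2 : Fin N → ℝ := fun b => z (Sum.inr (Sum.inl b)) with hz2def
  set z3 : ℝ := z (Sum.inr (Sum.inr ())) with hz3def
  -- block equations
  have E1 : ∀ a, K.mulVec z1 a + D.mulVec z2 a
      = lam * (G.mulVec z1 a + D.mulVec z2 a) := by
    intro a
    have h := congrFun heig (Sum.inl a)
    simpa [bigMat, Matrix.mulVec, dotProduct, Fintype.sum_sum_type,
      mul_add, hz1def, hz2def] using h
  have E2 : ∀ b, Dᵀ.mulVec z1 b + F.mulVec z2 b + z3
      = lam * (Dᵀ.mulVec z1 b + F.mulVec z2 b + z3) := by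
    intro b
    have h := congrFun heig (Sum.inr (Sum.inl b))
    simp only [bigMat, Matrix.mulVec, dotProduct, Fintype.sum_sum_type, Matrix.of_apply,
      Pi.smul_apply, smul_eq_mul, mul_add, Fintype.sum_unique, one_mul, zero_mul,
      mul_one, Finset.sum_const_zero, add_zero, zero_add] at h
    simp only [Matrix.mulVec, dotProduct, Matrix.transpose_apply, hz1def, hz2def, hz3def]
    linarith [h]
  have E3 : ∑ b, z2 b = lam * ∑ b, z2 b := by
    have h := congrFun heig (Sum.inr (Sum.inr ()))
    simpa [bigMat, Matrix.mulVec, dotProduct, Fintype.sum_sum_type,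
      hz2def] using h
  have fix : ∀ x : ℝ, x = lam * x → x = 0 := by
    intro x hx
    have h1 : x * (1 - lam) = 0 := by nlinarith
    rcases mul_eq_zero.1 h1 with h | h
    · exact h
    · exact absurd (by linarith : lam = 1) hlam
  have hs : ∑ b, z2 b = 0 := fix _ E3
  have E2' : ∀ b, Dᵀ.mulVec z1 b + F.mulVec z2 b + z3 = 0 := fun b => fix _ (E2 b)
  -- z2 = Z c
  obtain ⟨c, hc⟩ := (Submodule.mem_span_range_iff_exists_fun ℝ).1 ((hZspan z2).2 hs)
  have hz2Z : z2 = Z.mulVec c := by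
    funext i
    rw [← hc]
    simp [Matrix.mulVec, dotProduct, Finset.sum_apply, Matrix.transpose_apply,
      mul_comm]
  -- Zᵀ 1 = 0
  have hZ1v : Zᵀ.mulVec (fun _ => (1 : ℝ)) = 0 := by
    funext j
    have hj : (Zᵀ j) ∈ Submodule.span ℝ
        (Set.range fun j : Fin (N - 1) => Zᵀ j) :=
      Submodule.subset_span ⟨j, rfl⟩
    have := (hZspan (Zᵀ j)).1 hj
    simpa [Matrix.mulVec, dotProduct] using this
  -- multiply row-2 equation by Zᵀ
  have hw : Dᵀ.mulVec z1 + F.mulVec (Z.mulVec c) + z3 • (fun _ => (1 : ℝ)) = 0 := by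
    funext b
    have := E2' b
    rw [hz2Z] at this
    simpa using this
  set A := Zᵀ * F * Z with hA
  have key : A.mulVec c = -((D * Z)ᵀ.mulVec z1) := by
    have h0 : Zᵀ.mulVec (Dᵀ.mulVec z1 + F.mulVec (Z.mulVec c)
        + z3 • (fun _ => (1 : ℝ))) = 0 := by rw [hw]; simp
    rw [Matrix.mulVec_add, Matrix.mulVec_add, Matrix.mulVec_smul, hZ1v,
      Matrix.mulVec_mulVec, Matrix.mulVec_mulVec, Matrix.mulVec_mulVec] at h0
    have hT : (D * Z)ᵀ = Zᵀ * Dᵀ := Matrix.transpose_mul D Z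
    rw [hA, Matrix.mul_assoc, hT]
    have : (Zᵀ * Dᵀ).mulVec z1 + (Zᵀ * (F * Z)).mulVec c = 0 := by
      rw [← Matrix.mul_assoc]
      simpa [smul_zero, add_zero] using h0
    exact eq_neg_of_add_eq_zero_right this
  have hdet : IsUnit A.det := (Matrix.isUnit_iff_isUnit_det A).1 hZFZ
  have hAinv : A⁻¹ * A = 1 := Matrix.nonsing_inv_mul A hdet
  have hc_eq : c = A⁻¹.mulVec (-((D * Z)ᵀ.mulVec z1)) := by
    rw [← key, Matrix.mulVec_mulVec, hAinv, Matrix.one_mulVec]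
  have hDz2 : D.mulVec z2 = -(Q.mulVec z1) := by
    rw [hz2Z, hc_eq, hQ]
    simp [Matrix.mulVec_neg, Matrix.mulVec_mulVec, Matrix.mul_assoc]
  -- z1 ≠ 0
  have hz1ne : z1 ≠ 0 := by
    intro h0
    have hc0 : c = 0 := by
      rw [hc_eq, h0] ; simp
    have hz20 : z2 = 0 := by rw [hz2Z, hc0]; simp
    have hz30 : z3 = 0 := by
      have b0 : Fin N := ⟨0, by omega⟩
      have := E2' b0
      rw [h0, hz20] at this
      simpa using this
    apply hz
    funext i
    rcases i with a | b | u
    · exact congrFun h0 a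
    · exact congrFun hz20 b
    · exact hz30
  refine ⟨hz1ne, ?_⟩
  funext a
  have h1 := E1 a
  have hD := congrFun hDz2 a
  simp only [Matrix.sub_mulVec, Pi.sub_apply, Pi.smul_apply, smul_eq_mul,
    Pi.neg_apply] at h1 hD ⊢
  rw [hD] at h1
  linear_combination h1
end

section
/- Let N ≥ 2, let K, G be real n_Γ×n_Γ matrices, D a real n_Γ×N matrix, F a real N×N matrix, and 1_N ∈ ℝ^N the all-ones vector. Define 𝒦 = [[K, D, 0], [Dᵀ, F, 1_N], [0ᵀ, 1_Nᵀ, 0]] and 𝒢 = [[G, D, 0], [Dᵀ, F, 1_N], [0ᵀ, 1_Nᵀ, 0]]. Let Z ∈ ℝ^{N×(N−1)} be a matrix whose columns form a basis of {x ∈ ℝ^N : 1_Nᵀx = 0}, assume ZᵀFZ is invertible, and set Q = DZ(ZᵀFZ)^{−1}(DZ)ᵀ. If λ ≠ 1, x ∈ ℝ^{n_Γ} is nonzero, and (K − Q)x = λ(G − Q)x, then there exist unique z₂ ∈ ℝ^N and z₃ ∈ ℝ such that z = (x, z₂, z₃) satisfies 𝒦z = λ𝒢z; explicitly, z₂ =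 −Z(ZᵀFZ)^{−1}ZᵀDᵀx, and z₃ is the unique scalar with z₃·1_N = −(Dᵀx + Fz₂). -/
open Matrix

def Matrix.ColSpanEqSumZero {R n m : Type*} [CommRing R] [Fintype n] (Z : Matrix n m R) : Prop :=
  ∀ v : n → R, v ∈ Submodule.span R (Set.range Z.col) ↔ ∑ i, v i = 0

section SumZeroColumnSpace

variable {R n m : Type*} [CommRing R] [Fintype n] {Z : Matrix n m R}

theorem Matrix.ColSpanEqSumZero.sum_mulVec_eq_zero [Fintype m] (hZ : Z.ColSpanEqSumZero)
    (y : m → R) : ∑ i, (Z *ᵥ y) i = 0 :=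
  (hZ _).1 <| by rw [← range_mulVecLin]; exact ⟨y, rfl⟩

theorem Matrix.ColSpanEqSumZero.exists_mulVec_eq [Fintype m] (hZ : Z.ColSpanEqSumZero)
    {v : n → R} (hv : ∑ i, v i = 0) : ∃ y, Z *ᵥ y = v := by
  have := (hZ v).2 hv
  rwa [← range_mulVecLin] at this

theorem Matrix.ColSpanEqSumZero.transpose_mulVec_const (hZ : Z.ColSpanEqSumZero) (c : R) :
    Zᵀ *ᵥ (fun _ => c) = 0 := by
  funext j
  have hcol : ∑ i, Z i j = 0 := (hZ (Z.col j)).1 (Submodule.subset_span ⟨j, rfl⟩)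
  simp [mulVec, dotProduct, ← Finset.sum_mul, hcol]

theorem Matrix.ColSpanEqSumZero.eq_const_of_transpose_mulVec_eq_zero [Fintype m]
    (hZ : Z.ColSpanEqSumZero) {v : n → R} (hv : Zᵀ *ᵥ v = 0) (i₀ : n) : v = fun _ => v i₀ := by
  classical
  funext i
  obtain ⟨y, hy⟩ := hZ.exists_mulVec_eq
    (v := Pi.single i 1 - Pi.single i₀ 1) (by simp [Finset.sum_sub_distrib])
  have : v ⬝ᵥ (Z *ᵥ y) = 0 := by rw [dotProduct_mulVec, ← mulVec_transpose, hv, zero_dotProduct]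
  rw [hy, dotProduct_sub, dotProduct_single, dotProduct_single] at this
  simpa [sub_eq_zero] using this

end SumZeroColumnSpace

section SaddlePoint

variable {R n m : Type*} [CommRing R] [Fintype n] [Fintype m] [DecidableEq m]
  {Z : Matrix n m R} {F : Matrix n n R}

theorem Matrix.ColSpanEqSumZero.eq_neg_mulVec_of_saddle (hZ : Z.ColSpanEqSumZero)
    (hS : IsUnit (Zᵀ * F * Z)) {b u : n → R} {c : R} (hrow : b + F *ᵥ u + (fun _ => c) = 0)
    (hsum : ∑ i, u i = 0) : u = -((Z * (Zᵀ * F * Z)⁻¹ * Zᵀ) *ᵥ b) := by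
  obtain ⟨y, rfl⟩ := hZ.exists_mulVec_eq hsum
  have hreduced : Zᵀ *ᵥ b + (Zᵀ * F * Z) *ᵥ y = 0 := by
    have := congrArg (Zᵀ *ᵥ ·) hrow
    simpa only [mulVec_add, hZ.transpose_mulVec_const, add_zero, mulVec_zero,
      mulVec_mulVec, Matrix.mul_assoc] using this
  have hdet := (isUnit_iff_isUnit_det _).1 hS
  calc Z *ᵥ y = Z *ᵥ ((Zᵀ * F * Z)⁻¹ *ᵥ ((Zᵀ * F * Z) *ᵥ y)) := by
        rw [mulVec_mulVec y, nonsing_inv_mul _ hdet, one_mulVec]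
    _ = _ := by
        rw [eq_neg_of_add_eq_zero_right hreduced]
        simp only [mulVec_neg, mulVec_mulVec, Matrix.mul_assoc]

theorem transpose_mulVec_saddle_residual_eq_zero (hS : IsUnit (Zᵀ * F * Z)) (b : n → R) :
    Zᵀ *ᵥ (b + F *ᵥ -((Z * (Zᵀ * F * Z)⁻¹ * Zᵀ) *ᵥ b)) = 0 := by
  have hcancel : (Zᵀ * F * Z) * ((Zᵀ * F * Z)⁻¹ * Zᵀ) = Zᵀ :=
    mul_nonsing_inv_cancel_left _ _ ((isUnit_iff_isUnit_det _).1 hS)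
  rw [mulVec_add, mulVec_neg, mulVec_neg, mulVec_mulVec, mulVec_mulVec]
  simp only [← Matrix.mul_assoc] at hcancel ⊢
  rw [hcancel, add_neg_cancel]

end SaddlePoint

theorem eq_smul_self_iff_eq_zero {K M : Type*} [Field K] [AddCommGroup M] [Module K M] {c : K}
    (hc : c ≠ 1) {v : M} : v = c • v ↔ v = 0 := by
  refine ⟨fun h => ?_, fun h => by rw [h, smul_zero]⟩
  have : (1 - c) • v = 0 := by rw [sub_smul, one_smul, ← h, sub_self]
  exact (smul_eq_zero.1 this).resolve_left (sub_ne_zero.2 hc.symm)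

theorem Sum.smul_elim {S α β M : Type*} [SMul S M] (c : S) (f : α → M) (g : β → M) :
    c • Sum.elim f g = Sum.elim (c • f) (c • g) := by
  ext (_ | _) <;> rfl

section BlockSystem

variable {nΓ N : ℕ} {K G : Matrix (Fin nΓ) (Fin nΓ) ℝ} {D : Matrix (Fin nΓ) (Fin N) ℝ}
  {F : Matrix (Fin N) (Fin N) ℝ} {x : Fin nΓ → ℝ} {u : Fin N → ℝ} {c : ℝ}

theorem bigMat_mulVec :
    bigMat K D F *ᵥ Sum.elim x (Sum.elim u fun _ => c) =
      Sum.elim (K *ᵥ x + D *ᵥ u) (Sum.elim (Dᵀ *ᵥ x + F *ᵥ u + fun _ => c) fun _ => ∑ i, u i) := by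
  ext (a | b | _) <;> simp [bigMat, mulVec, dotProduct, Fintype.sum_sum_type, add_assoc]

theorem bigMat_mulVec_eq_smul_iff {lam : ℝ} (hlam : lam ≠ 1) :
    bigMat K D F *ᵥ Sum.elim x (Sum.elim u fun _ => c) =
        lam • bigMat G D F *ᵥ Sum.elim x (Sum.elim u fun _ => c) ↔
      K *ᵥ x + D *ᵥ u = lam • (G *ᵥ x + D *ᵥ u) ∧ Dᵀ *ᵥ x + F *ᵥ u + (fun _ => c) = 0 ∧
        ∑ i, u i = 0 := by
  simp only [bigMat_mulVec, Sum.smul_elim, Sum.elim_eq_iff, eq_smul_self_iff_eq_zero hlam]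
  simp [funext_iff]

theorem bigMat_mulVec_eq_smul_iff_of_reduced
    {m : Type*} [Fintype m] [DecidableEq m] {Z : Matrix (Fin N) m ℝ} (hZ : Z.ColSpanEqSumZero)
    (hS : IsUnit (Zᵀ * F * Z)) {Q : Matrix (Fin nΓ) (Fin nΓ) ℝ}
    (hQ : Q = D * Z * (Zᵀ * F * Z)⁻¹ * (D * Z)ᵀ) {lam : ℝ} (hlam : lam ≠ 1)
    (heig : (K - Q) *ᵥ x = lam • (G - Q) *ᵥ x) (i₀ : Fin N) :
    bigMat K D F *ᵥ Sum.elim x (Sum.elim u fun _ => c) =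
        lam • bigMat G D F *ᵥ Sum.elim x (Sum.elim u fun _ => c) ↔
      u = -((Z * (Zᵀ * F * Z)⁻¹ * Zᵀ * Dᵀ) *ᵥ x) ∧
        c = -(Dᵀ *ᵥ x + F *ᵥ -((Z * (Zᵀ * F * Z)⁻¹ * Zᵀ * Dᵀ) *ᵥ x)) i₀ := by
  have hassoc : (Z * (Zᵀ * F * Z)⁻¹ * Zᵀ * Dᵀ) *ᵥ x = (Z * (Zᵀ * F * Z)⁻¹ * Zᵀ) *ᵥ (Dᵀ *ᵥ x) := by
    rw [mulVec_mulVec]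
  rw [bigMat_mulVec_eq_smul_iff hlam]
  constructor
  · rintro ⟨-, hrow, hsum⟩
    obtain rfl : u = _ := hassoc ▸ hZ.eq_neg_mulVec_of_saddle hS hrow hsum
    refine ⟨rfl, ?_⟩
    have := congrFun hrow i₀
    simp only [Pi.add_apply, Pi.zero_apply] at this
    simp only [Pi.add_apply]
    linarith
  · rintro ⟨rfl, rfl⟩
    refine ⟨?_, ?_, ?_⟩
    · have hDu : D *ᵥ -((Z * (Zᵀ * F * Z)⁻¹ * Zᵀ * Dᵀ) *ᵥ x) = -(Q *ᵥ x) := by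
        rw [mulVec_neg, mulVec_mulVec, hQ, transpose_mul]
        simp only [Matrix.mul_assoc]
      rw [hDu, ← sub_eq_add_neg, ← sub_eq_add_neg, ← sub_mulVec, ← sub_mulVec, heig]
    · have hres := transpose_mulVec_saddle_residual_eq_zero hS (Dᵀ *ᵥ x)
      rw [← hassoc] at hres
      rw [hZ.eq_const_of_transpose_mulVec_eq_zero hres i₀]
      ext
      simp
    · rw [hassoc, Matrix.mul_assoc, Matrix.mul_assoc, ← mulVec_mulVec, ← mulVec_neg]
      exact hZ.sum_mulVec_eq_zero _

end BlockSystem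

theorem stmt3_general (nΓ N : ℕ) (hN : 2 ≤ N) (K G : Matrix (Fin nΓ) (Fin nΓ) ℝ)
    (D : Matrix (Fin nΓ) (Fin N) ℝ) (F : Matrix (Fin N) (Fin N) ℝ)
    (Z : Matrix (Fin N) (Fin (N - 1)) ℝ)
    (hZspan : ∀ x : Fin N → ℝ,
      x ∈ Submodule.span ℝ (Set.range fun j : Fin (N - 1) => Zᵀ j) ↔ ∑ i, x i = 0)
    (hZFZ : IsUnit (Zᵀ * F * Z))
    (Q : Matrix (Fin nΓ) (Fin nΓ) ℝ) (hQ : Q = D * Z * (Zᵀ * F * Z)⁻¹ * (D * Z)ᵀ)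
    (lam : ℝ) (hlam : lam ≠ 1)
    (x : Fin nΓ → ℝ)
    (heig : (K - Q).mulVec x = lam • (G - Q).mulVec x) :
    (∃! p : (Fin N → ℝ) × ℝ,
        (bigMat K D F).mulVec (Sum.elim x (Sum.elim p.1 fun _ => p.2)) =
          lam • (bigMat G D F).mulVec (Sum.elim x (Sum.elim p.1 fun _ => p.2))) ∧
    (∀ p : (Fin N → ℝ) × ℝ,
        (bigMat K D F).mulVec (Sum.elim x (Sum.elim p.1 fun _ => p.2)) =
          lam • (bigMat G D F).mulVec (Sum.elim x (Sum.elim p.1 fun _ => p.2)) →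
        p.1 = -((Z * (Zᵀ * F * Z)⁻¹ * Zᵀ * Dᵀ).mulVec x) ∧
        (p.2 • (fun _ : Fin N => (1 : ℝ))) = -(Dᵀ.mulVec x + F.mulVec p.1)) := by
  have hsolution (p : (Fin N → ℝ) × ℝ) := bigMat_mulVec_eq_smul_iff_of_reduced
    (u := p.1) (c := p.2) hZspan hZFZ hQ hlam heig ⟨0, by omega⟩
  refine ⟨⟨_, (hsolution (_, _)).2 ⟨rfl, rfl⟩, fun p hp => Prod.ext_iff.2 ((hsolution p).1 hp)⟩,
    fun p hp => ⟨((hsolution p).1 hp).1, ?_⟩⟩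
  obtain ⟨-, hrow, -⟩ := (bigMat_mulVec_eq_smul_iff hlam).1 hp
  rw [eq_neg_iff_add_eq_zero, ← hrow]
  ext
  simp [add_comm]

/-- If λ ≠ 1 and x ≠ 0 satisfies the reduced problem (K − Q)x = λ(G − Q)x, then there
exist unique z₂ ∈ ℝ^N and z₃ ∈ ℝ such that z = (x, z₂, z₃) satisfies 𝒦z = λ𝒢z;
explicitly z₂ = −Z(ZᵀFZ)⁻¹ZᵀDᵀx and z₃ is the unique scalar with
z₃·1_N = −(Dᵀx + Fz₂). -/
theorem stmt3 (nΓ N : ℕ) (hN : 2 ≤ N) (K G : Matrix (Fin nΓ) (Fin nΓ) ℝ)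
    (D : Matrix (Fin nΓ) (Fin N) ℝ) (F : Matrix (Fin N) (Fin N) ℝ)
    (Z : Matrix (Fin N) (Fin (N - 1)) ℝ)
    (hZli : LinearIndependent ℝ (fun j : Fin (N - 1) => Zᵀ j))
    (hZspan : ∀ x : Fin N → ℝ,
      x ∈ Submodule.span ℝ (Set.range fun j : Fin (N - 1) => Zᵀ j) ↔ ∑ i, x i = 0)
    (hZFZ : IsUnit (Zᵀ * F * Z))
    (Q : Matrix (Fin nΓ) (Fin nΓ) ℝ) (hQ : Q = D * Z * (Zᵀ * F * Z)⁻¹ * (D * Z)ᵀ)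
    (lam : ℝ) (hlam : lam ≠ 1)
    (x : Fin nΓ → ℝ) (hx : x ≠ 0)
    (heig : (K - Q).mulVec x = lam • (G - Q).mulVec x) :
    (∃! p : (Fin N → ℝ) × ℝ,
        (bigMat K D F).mulVec (Sum.elim x (Sum.elim p.1 fun _ => p.2)) =
          lam • (bigMat G D F).mulVec (Sum.elim x (Sum.elim p.1 fun _ => p.2))) ∧
    (∀ p : (Fin N → ℝ) × ℝ,
        (bigMat K D F).mulVec (Sum.elim x (Sum.elim p.1 fun _ => p.2)) =
          lam • (bigMat G D F).mulVec (Sum.elim x (Sum.elim p.1 fun _ => p.2)) →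
        p.1 = -((Z * (Zᵀ * F * Z)⁻¹ * Zᵀ * Dᵀ).mulVec x) ∧
        (p.2 • (fun _ : Fin N => (1 : ℝ))) = -(Dᵀ.mulVec x + F.mulVec p.1)) :=
  stmt3_general nΓ N hN K G D F Z hZspan hZFZ Q hQ lam hlam x heig
end
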